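/- arXiv:2012.04449 — 3 statements merged into one kernel-verified Lean document; each statement's English description precedes it below -/
import Mathlib

section
/- Let N ≥ 1 be an integer, s ∈ (0,1), Ω ⊂ ℝ^N a bounded measurable set, and u : ℝ^N → ℝ a measurable function with ∫_{ℝ^N} |u|² dx < ∞ and 𝓔_{ℝ^{2N}}(u) < ∞. Let (α_n) ⊂ ℝ^N be a sequence with |α_n| → ∞, and set u_n(x) = u(x − α_n). Then (1/2) 𝓔_{ℝ^{2N}∖(Ω×Ω)}(u_n) + ∫_{ℝ^N∖Ω} |u_n|² dx → (1/2) 𝓔_{ℝ^{2N}}(u) + ∫_{ℝ^N} |u|² dx as n → ∞. -/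
/-!
Translating back by `α n`, the two quantities become the energy density of `u` integrated over
the complement of `T n ×ˢ T n` and `|u|²` integrated over the complement of `T n`, where
`T n = Ω - α n`. Since `Ω` is bounded and `|α n| → ∞`, the sets `T n` eventually leave every
bounded set, and an integrable density carries vanishing mass on such sets.
-/

open MeasureTheory ENNReal Filter

/-- The Gagliardo energy `𝓔_A(u) = ∫∫_A |u(x)−u(y)|²/|x−y|^{N+2s} dx dy`,
as a Lebesgue integral with values in `[0,∞]`. -/
noncomputable def gagliardo (N : ℕ) (s : ℝ) (u : EuclideanSpace ℝ (Fin N) → ℝ)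
    (A : Set (EuclideanSpace ℝ (Fin N) × EuclideanSpace ℝ (Fin N))) : ℝ≥0∞ :=
  ∫⁻ p in A, ENNReal.ofReal (|u p.1 - u p.2| ^ 2 / ‖p.1 - p.2‖ ^ ((N : ℝ) + 2 * s))

open Bornology Set Topology

section Escape

variable {ι : Type*} {l : Filter ι}

theorem tendsto_preimage_add_smallSets_cobounded {E : Type*} [Bornology E] [AddCommGroup E]
    [BoundedSub E] {Ω : Set E} (hΩ : IsBounded Ω) {α : ι → E} (hα : Tendsto α l (cobounded E)) :
    Tendsto (fun i => (· + α i) ⁻¹' Ω) l (cobounded E).smallSets := by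
  refine tendsto_smallSets_iff.2 fun t ht => ?_
  filter_upwards [hα (isBounded_sub hΩ (isBounded_compl_iff.2 ht))] with i hi x hx
  by_contra hxt
  exact hi ⟨x + α i, hx, x, hxt, add_sub_cancel_left x (α i)⟩

theorem Filter.Tendsto.prod_smallSets_cobounded {X Y : Type*} [Bornology X] [Bornology Y]
    {S : ι → Set X} (hS : Tendsto S l (cobounded X).smallSets) (T : ι → Set Y) :
    Tendsto (fun i => S i ×ˢ T i) l (cobounded (X × Y)).smallSets := by
  refine tendsto_smallSets_iff.2 fun t ht => ?_
  rw [cobounded_prod] at ht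
  obtain ⟨t₁, ht₁, hsub⟩ := (mem_coprod_iff.1 ht).1
  filter_upwards [tendsto_smallSets_iff.1 hS t₁ ht₁] with i hi
  exact (prod_subset_preimage_fst _ _).trans ((preimage_mono hi).trans hsub)

end Escape

namespace MeasureTheory

theorem tendsto_measure_smallSets_cobounded {X : Type*} [PseudoMetricSpace X] [MeasurableSpace X]
    [OpensMeasurableSpace X] (μ : Measure X) [IsFiniteMeasure μ] :
    Tendsto μ (cobounded X).smallSets (𝓝 0) := by
  rcases isEmpty_or_nonempty X with _ | ⟨⟨c⟩⟩
  · exact tendsto_const_nhds.congr fun s => by simp [eq_empty_of_isEmpty s]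
  have hball : Tendsto (fun n : ℕ => μ (Metric.closedBall c n)ᶜ) atTop (𝓝 0) := by
    have := tendsto_measure_iInter_atTop (μ := μ) (s := fun n : ℕ => (Metric.closedBall c n)ᶜ)
      (fun n => measurableSet_closedBall.compl.nullMeasurableSet)
      (fun m n hmn => compl_subset_compl.2 (Metric.closedBall_subset_closedBall
        (Nat.cast_le.2 hmn))) ⟨0, measure_ne_top _ _⟩
    rwa [← compl_iUnion, Metric.iUnion_closedBall_nat, compl_univ, measure_empty] at this
  refine ENNReal.tendsto_nhds_zero.2 fun ε hε => ?_
  obtain ⟨n, hn⟩ := ((ENNReal.tendsto_nhds_zero.1 hball) ε hε).exists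
  exact (eventually_smallSets' fun s t hst ht => (measure_mono hst).trans ht).2
    ⟨_, (Metric.hasBasis_cobounded_compl_closedBall c).mem_of_mem trivial, hn⟩

theorem tendsto_setLIntegral_smallSets_cobounded {X : Type*} [PseudoMetricSpace X]
    [MeasurableSpace X] [OpensMeasurableSpace X] (μ : Measure X) [SFinite μ] {f : X → ℝ≥0∞}
    (hf : ∫⁻ x, f x ∂μ ≠ ∞) :
    Tendsto (fun s => ∫⁻ x in s, f x ∂μ) (cobounded X).smallSets (𝓝 0) := by
  have := isFiniteMeasure_withDensity hf
  exact (tendsto_measure_smallSets_cobounded _).congr fun s => withDensity_apply' f s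

theorem tendsto_setLIntegral_compl {α ι : Type*} [MeasurableSpace α] {μ : Measure α}
    {f : α → ℝ≥0∞} (hf : ∫⁻ x, f x ∂μ ≠ ∞) {l : Filter ι} {S : ι → Set α}
    (hS : Tendsto (fun i => ∫⁻ x in S i, f x ∂μ) l (𝓝 0)) :
    Tendsto (fun i => ∫⁻ x in (S i)ᶜ, f x ∂μ) l (𝓝 (∫⁻ x, f x ∂μ)) := by
  have hlower : Tendsto (fun i => (∫⁻ x, f x ∂μ) - ∫⁻ x in S i, f x ∂μ) l
      (𝓝 (∫⁻ x, f x ∂μ)) := by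
    simpa using ENNReal.Tendsto.sub tendsto_const_nhds hS (Or.inl hf)
  refine tendsto_of_tendsto_of_tendsto_of_le_of_le hlower tendsto_const_nhds (fun i => ?_)
    (fun i => setLIntegral_le_lintegral _ _)
  calc (∫⁻ x, f x ∂μ) - ∫⁻ x in S i, f x ∂μ
      = (∫⁻ x in S i ∪ (S i)ᶜ, f x ∂μ) - ∫⁻ x in S i, f x ∂μ := by
        rw [union_compl_self, Measure.restrict_univ]
    _ ≤ ∫⁻ x in (S i)ᶜ, f x ∂μ := tsub_le_iff_left.2 (lintegral_union_le _ _ _)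

theorem setLIntegral_comp_sub_right {G : Type*} [MeasurableSpace G] [AddGroup G] [MeasurableAdd G]
    (μ : Measure G) [μ.IsAddRightInvariant] (f : G → ℝ≥0∞) (A : Set G) (a : G) :
    ∫⁻ x in A, f (x - a) ∂μ = ∫⁻ x in (· + a) ⁻¹' A, f x ∂μ := by
  rw [← (measurePreserving_add_right μ a).setLIntegral_comp_preimage_emb
    (measurableEmbedding_addRight a)]
  simp

end MeasureTheory

theorem gagliardo_comp_sub (N : ℕ) (s : ℝ) (u : EuclideanSpace ℝ (Fin N) → ℝ)
    (A : Set (EuclideanSpace ℝ (Fin N) × EuclideanSpace ℝ (Fin N))) (a : EuclideanSpace ℝ (Fin N)) :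
    gagliardo N s (fun x => u (x - a)) A = gagliardo N s u (Prod.map (· + a) (· + a) ⁻¹' A) := by
  have := setLIntegral_comp_sub_right (volume.prod volume)
    (fun p => ENNReal.ofReal (|u p.1 - u p.2| ^ 2 / ‖p.1 - p.2‖ ^ ((N : ℝ) + 2 * s))) A (a, a)
  rw [← Measure.volume_eq_prod] at this
  have hmap : Prod.map (· + a) (· + a) = (· + (a, a)) := rfl
  rw [hmap]
  simpa [gagliardo, sub_sub_sub_cancel_right] using this

theorem stmt_4_general (N : ℕ) (s : ℝ)
    (Ω : Set (EuclideanSpace ℝ (Fin N))) (hΩb : Bornology.IsBounded Ω)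
    (u : EuclideanSpace ℝ (Fin N) → ℝ)
    (huL2 : (∫⁻ x, ENNReal.ofReal (|u x| ^ 2)) < ⊤)
    (huG : gagliardo N s u Set.univ < ⊤)
    (α : ℕ → EuclideanSpace ℝ (Fin N)) (hα : Tendsto (fun n => ‖α n‖) atTop atTop) :
    Tendsto
      (fun n =>
        (1 / 2) * gagliardo N s (fun x => u (x - α n)) ((Ω ×ˢ Ω)ᶜ)
          + ∫⁻ x in Ωᶜ, ENNReal.ofReal (|u (x - α n)| ^ 2))
      atTop
      (nhds ((1 / 2) * gagliardo N s u Set.univ + ∫⁻ x, ENNReal.ofReal (|u x| ^ 2))) := by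
  set T := fun n => (· + α n) ⁻¹' Ω
  have hT : Tendsto T atTop (cobounded _).smallSets :=
    tendsto_preimage_add_smallSets_cobounded hΩb (tendsto_norm_atTop_iff_cobounded.1 hα)
  have hG : Tendsto (fun n => gagliardo N s u (T n ×ˢ T n)ᶜ) atTop
      (𝓝 (gagliardo N s u univ)) := by
    rw [gagliardo, Measure.restrict_univ] at huG ⊢
    exact tendsto_setLIntegral_compl huG.ne
      ((tendsto_setLIntegral_smallSets_cobounded _ huG.ne).comp (hT.prod_smallSets_cobounded T))
  have hL : Tendsto (fun n => ∫⁻ x in (T n)ᶜ, ENNReal.ofReal (|u x| ^ 2)) atTop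
      (𝓝 (∫⁻ x, ENNReal.ofReal (|u x| ^ 2))) :=
    tendsto_setLIntegral_compl huL2.ne
      ((tendsto_setLIntegral_smallSets_cobounded _ huL2.ne).comp hT)
  refine ((ENNReal.Tendsto.const_mul hG (.inr (by norm_num : (1 / 2 : ℝ≥0∞) ≠ ⊤))).add hL).congr fun n => ?_
  rw [gagliardo_comp_sub, preimage_compl, preimage_prod_map_prod,
    setLIntegral_comp_sub_right volume (fun x => ENNReal.ofReal (|u x| ^ 2)), preimage_compl]

/-- For translates `u_n = u(· − α_n)` with `|α_n| → ∞` and `Ω` bounded, the exterior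
fractional norm squared of `u_n` (relative to `Ω`) converges to the full fractional
Sobolev norm squared of `u`. -/
theorem stmt_4 (N : ℕ) (hN : 1 ≤ N) (s : ℝ) (hs : s ∈ Set.Ioo (0 : ℝ) 1)
    (Ω : Set (EuclideanSpace ℝ (Fin N))) (hΩb : Bornology.IsBounded Ω) (hΩm : MeasurableSet Ω)
    (u : EuclideanSpace ℝ (Fin N) → ℝ) (hu : Measurable u)
    (huL2 : (∫⁻ x, ENNReal.ofReal (|u x| ^ 2)) < ⊤)
    (huG : gagliardo N s u Set.univ < ⊤)
    (α : ℕ → EuclideanSpace ℝ (Fin N)) (hα : Tendsto (fun n => ‖α n‖) atTop atTop) :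
    Tendsto
      (fun n =>
        (1 / 2) * gagliardo N s (fun x => u (x - α n)) ((Ω ×ˢ Ω)ᶜ)
          + ∫⁻ x in Ωᶜ, ENNReal.ofReal (|u (x - α n)| ^ 2))
      atTop
      (nhds ((1 / 2) * gagliardo N s u Set.univ + ∫⁻ x, ENNReal.ofReal (|u x| ^ 2))) :=
  stmt_4_general N s Ω hΩb u huL2 huG α hα
end

section
/- Let N ≥ 1 be an integer, s ∈ (0,1), Ω ⊂ ℝ^N a bounded measurable set, and u : ℝ^N → ℝ a measurable function with ∫_{ℝ^N} |u|² dx < ∞ and 𝓔_{ℝ^{2N}}(u) < ∞. Let (α_n) ⊂ ℝ^N with |α_n| → ∞ and set u_n(x) = u(x − α_n). Then a_n := (1/2) 𝓔_{Ω×Ω}(u_n) + ∫_Ω |u_n|² dx → 0 as n → ∞. -/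
/-!
Both terms of `a_n` are integrals of a fixed integrable density (`|u|²`, resp. the Gagliardo
integrand on `ℝᴺ × ℝᴺ`) over a translate of a bounded set (`Ω`, resp. `Ω × Ω`) by a vector that
escapes to infinity (`α_n`, resp. `(α_n, α_n)`). Such translates eventually lie outside any ball,
and the integral of an integrable density outside the ball of radius `r` tends to `0` as `r → ∞`
by continuity from above of the finite measure with that density.
-/

open MeasureTheory ENNReal Filter

open Metric Topology

lemma tendsto_setLIntegral_compl_ball {X : Type*} [PseudoMetricSpace X] [MeasurableSpace X]
    [OpensMeasurableSpace X] {μ : Measure X} {g : X → ℝ≥0∞} (hg : ∫⁻ x, g x ∂μ ≠ ⊤) (x₀ : X) :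
    Tendsto (fun r : ℝ => ∫⁻ x in (ball x₀ r)ᶜ, g x ∂μ) atTop (𝓝 0) := by
  have hν : ∀ r : ℝ, μ.withDensity g (ball x₀ r)ᶜ = ∫⁻ x in (ball x₀ r)ᶜ, g x ∂μ :=
    fun r => withDensity_apply g measurableSet_ball.compl
  have hempty : ⋂ r : ℝ, (ball x₀ r)ᶜ = ∅ := by
    refine Set.eq_empty_of_forall_notMem fun x hx => ?_
    obtain ⟨r, hr⟩ := exists_gt (dist x x₀)
    exact Set.mem_iInter.1 hx r (mem_ball.2 hr)
  have h := tendsto_measure_iInter_atTop (μ := μ.withDensity g)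
    (fun r => measurableSet_ball.compl.nullMeasurableSet)
    (fun r r' hrr' => Set.compl_subset_compl.2 (ball_subset_ball hrr'))
    ⟨0, by rw [hν]; exact ne_top_of_le_ne_top hg (setLIntegral_le_lintegral _ _)⟩
  rw [hempty, measure_empty] at h
  simpa only [Function.comp_def, hν] using h

lemma setLIntegral_comp_sub_le_compl_ball {E : Type*} [SeminormedAddCommGroup E]
    [MeasurableSpace E] [OpensMeasurableSpace E] [MeasurableAdd E] {μ : Measure E}
    [μ.IsAddRightInvariant] (g : E → ℝ≥0∞) {K : Set E} {M : ℝ} (hK : K ⊆ ball 0 M)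
    (b : E) : ∫⁻ x in K, g (x - b) ∂μ ≤ ∫⁻ y in (ball 0 (‖b‖ - M))ᶜ, g y ∂μ := by
  have htrans : ∫⁻ x in K, g (x - b) ∂μ = ∫⁻ y in (· + b) ⁻¹' K, g y ∂μ := by
    have h := (measurePreserving_sub_right μ b).setLIntegral_comp_preimage_emb
      (measurableEmbedding_subRight b) g ((· + b) ⁻¹' K)
    simpa only [Set.preimage_preimage, sub_add_cancel, Set.preimage_id'] using h
  rw [htrans]
  refine lintegral_mono_set fun y hy => ?_
  have hyb : ‖y + b‖ < M := by simpa using hK hy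
  have hb : ‖b‖ ≤ ‖y + b‖ + ‖y‖ := by simpa using norm_sub_le (y + b) y
  simp only [Set.mem_compl_iff, mem_ball, dist_zero_right, not_lt]
  linarith

theorem tendsto_setLIntegral_comp_sub_of_tendsto_norm {E ι : Type*} [SeminormedAddCommGroup E]
    [MeasurableSpace E] [OpensMeasurableSpace E] [MeasurableAdd E] {μ : Measure E}
    [μ.IsAddRightInvariant] {g : E → ℝ≥0∞} (hg : ∫⁻ x, g x ∂μ ≠ ⊤) {K : Set E}
    (hK : Bornology.IsBounded K) {l : Filter ι} {b : ι → E}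
    (hb : Tendsto (fun i => ‖b i‖) l atTop) :
    Tendsto (fun i => ∫⁻ x in K, g (x - b i) ∂μ) l (𝓝 0) := by
  obtain ⟨M, hM⟩ := hK.subset_ball 0
  have hradius : Tendsto (fun i => ‖b i‖ - M) l atTop := tendsto_atTop_add_const_right _ _ hb
  exact tendsto_of_tendsto_of_tendsto_of_le_of_le tendsto_const_nhds
    ((tendsto_setLIntegral_compl_ball hg 0).comp hradius) (fun _ => zero_le)
    (fun i => setLIntegral_comp_sub_le_compl_ball g hM (b i))

theorem stmt_5_general (N : ℕ) (s : ℝ)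
    (Ω : Set (EuclideanSpace ℝ (Fin N))) (hΩb : Bornology.IsBounded Ω)
    (u : EuclideanSpace ℝ (Fin N) → ℝ)
    (huL2 : (∫⁻ x, ENNReal.ofReal (|u x| ^ 2)) < ⊤)
    (huG : gagliardo N s u Set.univ < ⊤)
    (α : ℕ → EuclideanSpace ℝ (Fin N)) (hα : Tendsto (fun n => ‖α n‖) atTop atTop) :
    Tendsto
      (fun n =>
        (1 / 2) * gagliardo N s (fun x => u (x - α n)) (Ω ×ˢ Ω)
          + ∫⁻ x in Ω, ENNReal.ofReal (|u (x - α n)| ^ 2))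
      atTop (nhds 0) := by
  have hL2 := tendsto_setLIntegral_comp_sub_of_tendsto_norm huL2.ne hΩb hα
  have hdiag : Tendsto (fun n => ‖(α n, α n)‖) atTop atTop := by
    simpa only [Prod.norm_def, max_self] using hα
  have hGfin := huG.ne
  rw [gagliardo, Measure.restrict_univ, Measure.volume_eq_prod] at hGfin
  have hG := tendsto_setLIntegral_comp_sub_of_tendsto_norm hGfin (hΩb.prod hΩb) hdiag
  have hG' : Tendsto (fun n => gagliardo N s (fun x => u (x - α n)) (Ω ×ˢ Ω)) atTop (𝓝 0) := by
    simpa only [gagliardo, Measure.volume_eq_prod, Prod.fst_sub, Prod.snd_sub,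
      sub_sub_sub_cancel_right] using hG
  simpa using (ENNReal.Tendsto.const_mul hG' (Or.inr (by simp))).add hL2

/-- For translates `u_n = u(· − α_n)` with `|α_n| → ∞` and `Ω` bounded, the local energy
`a_n = (1/2) 𝓔_{Ω×Ω}(u_n) + ∫_Ω |u_n|² dx` tends to `0`. -/
theorem stmt_5 (N : ℕ) (hN : 1 ≤ N) (s : ℝ) (hs : s ∈ Set.Ioo (0 : ℝ) 1)
    (Ω : Set (EuclideanSpace ℝ (Fin N))) (hΩb : Bornology.IsBounded Ω) (hΩm : MeasurableSet Ω)
    (u : EuclideanSpace ℝ (Fin N) → ℝ) (hu : Measurable u)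
    (huL2 : (∫⁻ x, ENNReal.ofReal (|u x| ^ 2)) < ⊤)
    (huG : gagliardo N s u Set.univ < ⊤)
    (α : ℕ → EuclideanSpace ℝ (Fin N)) (hα : Tendsto (fun n => ‖α n‖) atTop atTop) :
    Tendsto
      (fun n =>
        (1 / 2) * gagliardo N s (fun x => u (x - α n)) (Ω ×ˢ Ω)
          + ∫⁻ x in Ω, ENNReal.ofReal (|u (x - α n)| ^ 2))
      atTop (nhds 0) :=
  stmt_5_general N s Ω hΩb u huL2 huG α hα
end

section
/- For all real numbers a, b ≥ 0 and every real β ≥ 1, the inequality (a^{(β+1)/2} − b^{(β+1)/2})² ≤ ((β+1)²/(4β)) (a − b)(a^β − b^β) holds. (This algebraic inequality relates the test-function computation with u^β to the Gagliardo energy of u^{(β+1)/2} in the Moser iteration of the boundedness proof.) -/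
/-!
With `q = (β - 1) / 2` and `p = (β + 1) / 2`, the fundamental theorem of calculus gives
`∫_b^a t^q dt = (a^p - b^p) / p` and `∫_b^a t^{2q} dt = (a^β - b^β) / β`, so the inequality
is the Cauchy–Schwarz inequality `(∫_b^a f)² ≤ (a - b) ∫_b^a f²` for `f t = t^q`.
-/

open Real Set intervalIntegral

theorem sq_intervalIntegral_le_mul_intervalIntegral_sq {f : ℝ → ℝ} {a b : ℝ}
    (hf : ContinuousOn f (uIcc a b)) :
    (∫ t in a..b, f t) ^ 2 ≤ (b - a) * ∫ t in a..b, f t ^ 2 := by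
  wlog hab : a ≤ b generalizing a b
  · have := this (uIcc_comm a b ▸ hf) (le_of_not_ge hab)
    rw [integral_symm b a, integral_symm b a (f := fun t => f t ^ 2)]
    linarith
  have hf_int : IntervalIntegrable f MeasureTheory.volume a b := hf.intervalIntegrable
  have hf_sq_int : IntervalIntegrable (fun t => f t ^ 2) MeasureTheory.volume a b :=
    (hf.pow 2).intervalIntegrable
  set J := ∫ t in a..b, f t
  -- Cauchy–Schwarz from `0 ≤ ∫ ((b - a) f - J)²`.
  have hexpand : ∫ t in a..b, ((b - a) * f t - J) ^ 2 =
      (b - a) * ((b - a) * (∫ t in a..b, f t ^ 2) - J ^ 2) := by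
    have hpoly : (fun t => ((b - a) * f t - J) ^ 2) =
        fun t => (b - a) ^ 2 * f t ^ 2 - 2 * (b - a) * J * f t + J ^ 2 := by
      ext t; ring
    rw [hpoly,
      integral_add ((hf_sq_int.const_mul _).sub (hf_int.const_mul _)) intervalIntegrable_const,
      integral_sub (hf_sq_int.const_mul _) (hf_int.const_mul _), integral_const_mul,
      integral_const_mul, integral_const, smul_eq_mul]
    ring
  have hnonneg : 0 ≤ (b - a) * ((b - a) * (∫ t in a..b, f t ^ 2) - J ^ 2) :=
    hexpand ▸ integral_nonneg hab fun t _ => sq_nonneg _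
  rcases hab.eq_or_lt with rfl | hlt
  · simp [J]
  · nlinarith [mul_nonneg_iff_of_pos_left (sub_pos.2 hlt) |>.1 hnonneg]

/-- The algebraic inequality of the Moser iteration: for `a, b ≥ 0` and `β ≥ 1`,
`(a^{(β+1)/2} − b^{(β+1)/2})² ≤ ((β+1)²/(4β)) (a − b)(a^β − b^β)`. -/
theorem stmt_13 (a b β : ℝ) (ha : 0 ≤ a) (hb : 0 ≤ b) (hβ : 1 ≤ β) :
    (a ^ ((β + 1) / 2) - b ^ ((β + 1) / 2)) ^ 2 ≤
      ((β + 1) ^ 2 / (4 * β)) * ((a - b) * (a ^ β - b ^ β)) := by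
  have hβ0 : 0 < β := by linarith
  have hp : 0 < (β + 1) / 2 := by linarith
  have hcs := sq_intervalIntegral_le_mul_intervalIntegral_sq (a := b) (b := a)
    (f := fun t => t ^ ((β - 1) / 2))
    (continuousOn_id.rpow_const fun _ _ => Or.inr (by linarith))
  have hint : ∫ t in b..a, t ^ ((β - 1) / 2) =
      (a ^ ((β + 1) / 2) - b ^ ((β + 1) / 2)) / ((β + 1) / 2) := by
    rw [integral_rpow (Or.inl (by linarith))]
    ring_nf
  have hint_sq : ∫ t in b..a, (t ^ ((β - 1) / 2)) ^ 2 = (a ^ β - b ^ β) / β := by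
    have hsq : ∀ t ∈ uIcc b a, (t ^ ((β - 1) / 2)) ^ 2 = t ^ (β - 1) := fun t ht => by
      rw [← rpow_mul_natCast (le_min hb ha |>.trans ht.1)]
      ring_nf
    rw [integral_congr hsq, integral_rpow (Or.inl (by linarith)), sub_add_cancel]
  rw [hint, hint_sq] at hcs
  calc (a ^ ((β + 1) / 2) - b ^ ((β + 1) / 2)) ^ 2
      = ((β + 1) / 2) ^ 2 * ((a ^ ((β + 1) / 2) - b ^ ((β + 1) / 2)) / ((β + 1) / 2)) ^ 2 := by
        field_simp
    _ ≤ ((β + 1) / 2) ^ 2 * ((a - b) * ((a ^ β - b ^ β) / β)) := by gcongr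
    _ = ((β + 1) ^ 2 / (4 * β)) * ((a - b) * (a ^ β - b ^ β)) := by
        field_simp
        ring
end
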